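/- Let V, W be finite-dimensional vector spaces over ℝ of the same dimension n, and suppose given symmetric bilinear forms η, η' on V and symmetric bilinear forms θ, θ' on W, together with an isomorphism of pairs in the following weak sense: there exist endomorphisms u of V and v of W, with η'(x,y) = η(x, uy), θ'(x,y) = θ(x, vy), u self-adjoint for η, v self-adjoint for θ, and u, v have the same characteristic polynomial. If η and η' are positive definite and θ is nondegenerate, then θ and θ' have the same signature. -/

import Mathlib

open Module

/-- The positive index of inertia. -/
noncomputable def posIndex {V : Type*} [AddCommGroup V] [Module ℝ V]
    (B : V →ₗ[ℝ] V →ₗ[ℝ] ℝ) : ℕ :=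
  sSup {n : ℕ | ∃ W : Submodule ℝ V, Module.finrank ℝ W = n ∧ ∀ x ∈ W, x ≠ 0 → 0 < B x x}

/-- The negative index of inertia. -/
noncomputable def negIndex {V : Type*} [AddCommGroup V] [Module ℝ V]
    (B : V →ₗ[ℝ] V →ₗ[ℝ] ℝ) : ℕ :=
  sSup {n : ℕ | ∃ W : Submodule ℝ V, Module.finrank ℝ W = n ∧ ∀ x ∈ W, x ≠ 0 → B x x < 0}

/-- The signature `(s₊, s₋)` of a bilinear form. -/
noncomputable def signature {V : Type*} [AddCommGroup V] [Module ℝ V]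
    (B : V →ₗ[ℝ] V →ₗ[ℝ] ℝ) : ℕ × ℕ :=
  (posIndex B, negIndex B)

/-!
Positivity of `η` and `η'` makes `u` a symmetric operator with positive eigenvalues for the
Euclidean structure `η`, so the common characteristic polynomial of `u` and `v` is
`∏ (X - μᵢ)` with all `μᵢ > 0`. Hensel lifting at each root and the Chinese remainder theorem
give a real polynomial `p` with `charpoly v ∣ p² - X`; by Cayley–Hamilton `w = p(v)` is a square
root of `v`, it is `θ`-self-adjoint (being a polynomial in `v`) and invertible (as `v` is). Hence
`θ'(x, y) = θ(x, w² y) = θ(w x, w y)`, so `θ'` is congruent to `θ` and has the same signature.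
This replaces the deformation `λ v + (1 - λ) id` of the paper.
-/

open Polynomial Function

theorem IsCoprime.exists_mul_dvd_sq_sub {R : Type*} [CommRing R] {f g p q a : R}
    (hfg : IsCoprime f g) (hf : f ∣ p ^ 2 - a) (hg : g ∣ q ^ 2 - a) :
    ∃ r, f * g ∣ r ^ 2 - a := by
  obtain ⟨x, y, hxy⟩ := id hfg
  set r := q * x * f + p * y * g
  refine ⟨r, hfg.mul_dvd ?_ ?_⟩
  · rw [show r ^ 2 - a = f * ((q - p) * x * (r + p)) + (p ^ 2 - a) by
      linear_combination (p * (r + p)) * hxy]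
    exact dvd_add (dvd_mul_right _ _) hf
  · rw [show r ^ 2 - a = g * ((p - q) * y * (r + q)) + (q ^ 2 - a) by
      linear_combination (q * (r + q)) * hxy]
    exact dvd_add (dvd_mul_right _ _) hg

theorem Finset.exists_prod_dvd_sq_sub {ι R : Type*} [CommRing R] [DecidableEq ι] (s : Finset ι)
    {f : ι → R} {a : R} (hcop : (s : Set ι).Pairwise (IsCoprime on f))
    (h : ∀ i ∈ s, ∃ p, f i ∣ p ^ 2 - a) : ∃ r, ∏ i ∈ s, f i ∣ r ^ 2 - a := by
  induction s using Finset.induction_on with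
  | empty => exact ⟨0, by simp⟩
  | insert i s hi ih =>
    rw [Finset.coe_insert, Set.pairwise_insert] at hcop
    obtain ⟨p, hp⟩ := h i (Finset.mem_insert_self i s)
    obtain ⟨q, hq⟩ := ih hcop.1 fun j hj => h j (Finset.mem_insert_of_mem hj)
    have hcop' : IsCoprime (f i) (∏ j ∈ s, f j) :=
      IsCoprime.prod_right fun j hj => (hcop.2 j hj (ne_of_mem_of_not_mem hj hi).symm).1
    rw [Finset.prod_insert hi]
    exact hcop'.exists_mul_dvd_sq_sub hp hq

section SquareRootModulo

variable {K : Type*} [Field K] [NeZero (2 : K)]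

/-- Newton–Hensel lifting: a square root `p` of `a` modulo `(X - μ) ^ (e + 1)` is corrected by a
multiple of `(X - μ) ^ (e + 1)` into one modulo `(X - μ) ^ (e + 2)`; this needs `2 p(μ) ≠ 0`. -/
theorem Polynomial.exists_X_sub_C_pow_succ_dvd_sq_sub {a : K[X]} {μ : K}
    (hsq : IsSquare (a.eval μ)) (hne : a.eval μ ≠ 0) (e : ℕ) :
    ∃ p : K[X], (X - C μ) ^ (e + 1) ∣ p ^ 2 - a := by
  induction e with
  | zero =>
    obtain ⟨s, hs⟩ := hsq
    refine ⟨C s, ?_⟩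
    rw [pow_one, dvd_iff_isRoot]
    simp [hs, sq]
  | succ e ih =>
    obtain ⟨p, q, hq⟩ := ih
    have hp : eval μ p ^ 2 = eval μ a := by
      simpa [sub_eq_zero] using congrArg (eval μ) hq
    have hp0 : eval μ p ≠ 0 := fun h => hne (by rw [← hp, h]; ring)
    set c := -eval μ q / (2 * eval μ p)
    refine ⟨p + C c * (X - C μ) ^ (e + 1), ?_⟩
    have hroot : X - C μ ∣ q + 2 * C c * p + C c ^ 2 * (X - C μ) ^ (e + 1) := by
      have heval : eval μ (q + 2 * C c * p + C c ^ 2 * (X - C μ) ^ (e + 1))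
          = eval μ q + 2 * c * eval μ p := by
        simp
      rw [dvd_iff_isRoot, IsRoot, heval, mul_right_comm,
        mul_div_cancel₀ _ (mul_ne_zero two_ne_zero hp0), add_neg_cancel]
    calc (X - C μ) ^ (e + 1 + 1)
        ∣ (X - C μ) ^ (e + 1) * (q + 2 * C c * p + C c ^ 2 * (X - C μ) ^ (e + 1)) := by
          rw [pow_succ]
          exact mul_dvd_mul_left _ hroot
      _ = (p + C c * (X - C μ) ^ (e + 1)) ^ 2 - a := by
          linear_combination -hq

theorem Polynomial.exists_multiset_prod_X_sub_C_dvd_sq_sub (m : Multiset K) {a : K[X]}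
    (h : ∀ μ ∈ m, IsSquare (a.eval μ) ∧ a.eval μ ≠ 0) :
    ∃ p : K[X], (m.map (X - C ·)).prod ∣ p ^ 2 - a := by
  classical
  rw [Finset.prod_multiset_map_count]
  refine Finset.exists_prod_dvd_sq_sub _ ?_ fun μ hμ => ?_
  · exact fun μ _ ν _ hμν => (pairwise_coprime_X_sub_C injective_id hμν).pow
  · obtain ⟨hsq, hne⟩ := h μ (Multiset.mem_toFinset.mp hμ)
    obtain ⟨p, hp⟩ := exists_X_sub_C_pow_succ_dvd_sq_sub hsq hne (m.count μ)
    exact ⟨p, (pow_dvd_pow _ (Nat.le_succ _)).trans hp⟩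

end SquareRootModulo

theorem Module.End.hasEigenvalue_iff_mem_of_charpoly_eq {K V : Type*} [Field K]
    [AddCommGroup V] [Module K V] [FiniteDimensional K V] {f : Module.End K V}
    {m : Multiset K} (hf : f.charpoly = (m.map (X - C ·)).prod) (μ : K) :
    f.HasEigenvalue μ ↔ μ ∈ m := by
  have hne : (m.map (X - C ·)).prod ≠ 0 :=
    (monic_multiset_prod_of_monic _ _ fun a _ => monic_X_sub_C a).ne_zero
  rw [hasEigenvalue_iff_isRoot_charpoly, hf, ← mem_roots hne, roots_multiset_prod_X_sub_C]

theorem Module.End.HasEigenvalue.pos {R V : Type*} [CommRing R] [LinearOrder R]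
    [IsStrictOrderedRing R] [AddCommGroup V] [Module R V] {η : V →ₗ[R] V →ₗ[R] R}
    {f : Module.End R V} {μ : R} (hη : ∀ x, x ≠ 0 → 0 < η x x)
    (hf : ∀ x, x ≠ 0 → 0 < η x (f x)) (hμ : f.HasEigenvalue μ) : 0 < μ := by
  obtain ⟨x, hx⟩ := hμ.exists_hasEigenvector
  have hμx := hf x hx.2
  rw [hx.apply_eq_smul, map_smul, smul_eq_mul] at hμx
  exact pos_of_mul_pos_left hμx (hη x hx.2).le

theorem Module.End.aeval_sq_eq_of_charpoly_dvd {R M : Type*} [CommRing R] [AddCommGroup M]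
    [Module R M] [Module.Free R M] [Module.Finite R M] {f : Module.End R M} {p : R[X]}
    (h : f.charpoly ∣ p ^ 2 - X) : aeval f p ^ 2 = f := by
  obtain ⟨q, hq⟩ := h
  have := congrArg (aeval f) hq
  rwa [map_mul, LinearMap.aeval_self_charpoly, zero_mul, map_sub, aeval_X, sub_eq_zero,
    map_pow] at this

theorem LinearMap.IsAdjointPair.aeval {R M N : Type*} [CommRing R] [AddCommGroup M]
    [Module R M] [AddCommGroup N] [Module R N] {B : M →ₗ[R] M →ₗ[R] N} {f : Module.End R M}
    (hf : IsAdjointPair B B f f) (p : R[X]) :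
    IsAdjointPair B B (Polynomial.aeval f p) (Polynomial.aeval f p) := by
  induction p using Polynomial.induction_on with
  | C a =>
    rw [aeval_C, Algebra.algebraMap_eq_smul_one]
    exact isAdjointPair_one.smul a
  | add p q hp hq =>
    rw [map_add]
    exact hp.add hq
  | monomial n a ih =>
    have h := ih.mul hf
    have hr : Polynomial.aeval f (C a * X ^ n) * f = Polynomial.aeval f (C a * X ^ (n + 1)) := by
      rw [pow_succ, ← mul_assoc, map_mul _ _ X, aeval_X]
    have hl : f * Polynomial.aeval f (C a * X ^ n) = Polynomial.aeval f (C a * X ^ (n + 1)) := by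
      rw [pow_succ', mul_left_comm, map_mul _ X, aeval_X]
    rwa [hr, hl] at h

theorem LinearMap.exists_charpoly_eq_multiset_prod_of_isAdjointPair {V : Type*}
    [AddCommGroup V] [Module ℝ V] [FiniteDimensional ℝ V] {η : V →ₗ[ℝ] V →ₗ[ℝ] ℝ}
    (hsymm : ∀ x y, η x y = η y x) (hpos : ∀ x, x ≠ 0 → 0 < η x x) {u : Module.End ℝ V}
    (hu : IsAdjointPair η η u u) :
    ∃ m : Multiset ℝ, u.charpoly = (m.map (X - C ·)).prod := by
  let core : InnerProductSpace.Core ℝ V :=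
    { inner x y := η x y
      conj_inner_symm x y := hsymm y x
      re_inner_nonneg x := by
        rcases eq_or_ne x 0 with rfl | hx
        · simp
        · exact (hpos x hx).le
      add_left := by simp
      smul_left := by simp
      definite x hx := by_contra fun hx0 => (hpos x hx0).ne' hx }
  let _ := core.toNormedAddCommGroup
  let _ := InnerProductSpace.ofCore core.toCore
  have hsym : u.IsSymmetric := hu
  refine ⟨Finset.univ.val.map (hsym.eigenvalues rfl), ?_⟩
  rw [hsym.charpoly_eq rfl, Multiset.map_map]
  rfl

section Congruence

variable {V V' : Type*} [AddCommGroup V] [Module ℝ V] [AddCommGroup V'] [Module ℝ V']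
  (B : V' →ₗ[ℝ] V' →ₗ[ℝ] ℝ) (e : V ≃ₗ[ℝ] V')

theorem exists_submodule_of_comp_linearEquiv (P : ℝ → Prop) {n : ℕ}
    (h : ∃ S : Submodule ℝ V, finrank ℝ S = n ∧ ∀ x ∈ S, x ≠ 0 → P (B (e x) (e x))) :
    ∃ S : Submodule ℝ V', finrank ℝ S = n ∧ ∀ x ∈ S, x ≠ 0 → P (B x x) := by
  obtain ⟨S, rfl, hS⟩ := h
  refine ⟨S.map (e : V →ₗ[ℝ] V'), LinearEquiv.finrank_map_eq e S, ?_⟩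
  rintro _ ⟨x, hx, rfl⟩ hx0
  exact hS x hx (by simpa using hx0)

theorem setOf_exists_submodule_compl₁₂ (P : ℝ → Prop) :
    {n : ℕ | ∃ S : Submodule ℝ V, finrank ℝ S = n ∧
        ∀ x ∈ S, x ≠ 0 → P (B.compl₁₂ (e : V →ₗ[ℝ] V') (e : V →ₗ[ℝ] V') x x)} =
      {n : ℕ | ∃ S : Submodule ℝ V', finrank ℝ S = n ∧ ∀ x ∈ S, x ≠ 0 → P (B x x)} := by
  ext n
  refine ⟨exists_submodule_of_comp_linearEquiv B e P, fun h => ?_⟩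
  exact exists_submodule_of_comp_linearEquiv _ e.symm P (by simpa using h)

theorem signature_compl₁₂ :
    signature (B.compl₁₂ (e : V →ₗ[ℝ] V') (e : V →ₗ[ℝ] V')) = signature B := by
  rw [signature, signature, posIndex, posIndex, negIndex, negIndex,
    setOf_exists_submodule_compl₁₂ B e (0 < ·), setOf_exists_submodule_compl₁₂ B e (· < 0)]

end Congruence

theorem stmt_19_general {V : Type*} [AddCommGroup V] [Module ℝ V] [FiniteDimensional ℝ V]
    {W : Type*} [AddCommGroup W] [Module ℝ W] [FiniteDimensional ℝ W]
    (η η' : V →ₗ[ℝ] V →ₗ[ℝ] ℝ) (θ θ' : W →ₗ[ℝ] W →ₗ[ℝ] ℝ)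
    (hηsymm : ∀ x y, η x y = η y x)
    (u : V →ₗ[ℝ] V) (v : W →ₗ[ℝ] W)
    (hu : ∀ x y, η' x y = η x (u y)) (hv : ∀ x y, θ' x y = θ x (v y))
    (husa : ∀ x y, η (u x) y = η x (u y)) (hvsa : ∀ x y, θ (v x) y = θ x (v y))
    (hcharpoly : LinearMap.charpoly u = LinearMap.charpoly v)
    (hηpos : ∀ x : V, x ≠ 0 → 0 < η x x) (hη'pos : ∀ x : V, x ≠ 0 → 0 < η' x x) :
    signature θ = signature θ' := by
  obtain ⟨m, hu_m⟩ := LinearMap.exists_charpoly_eq_multiset_prod_of_isAdjointPair hηsymm hηpos husa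
  have hv_m : v.charpoly = (m.map (X - C ·)).prod := hcharpoly ▸ hu_m
  have hm_pos : ∀ μ ∈ m, 0 < μ := fun μ hμ =>
    ((Module.End.hasEigenvalue_iff_mem_of_charpoly_eq hu_m μ).mpr hμ).pos hηpos
      fun x hx => hu x x ▸ hη'pos x hx
  obtain ⟨p, hp⟩ := exists_multiset_prod_X_sub_C_dvd_sq_sub m (a := X) fun μ hμ => by
    simpa using ⟨(hm_pos μ hμ).le, (hm_pos μ hμ).ne'⟩
  set w := aeval v p
  have hw_sq : w ^ 2 = v := Module.End.aeval_sq_eq_of_charpoly_dvd (hv_m ▸ hp)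
  have hv_inj : ∀ x, v x = 0 → x = 0 := ((LinearMap.not_hasEigenvalue_zero_tfae v).out 0 5).mp
    fun h => (hm_pos 0 ((Module.End.hasEigenvalue_iff_mem_of_charpoly_eq hv_m 0).mp h)).false
  have hw_inj : Injective w := (injective_iff_map_eq_zero w).mpr fun x hx =>
    hv_inj x (by rw [← hw_sq, sq, Module.End.mul_apply, hx, map_zero])
  let e := LinearEquiv.ofInjectiveEndo w hw_inj
  have hθ' : θ' = θ.compl₁₂ (e : W →ₗ[ℝ] W) (e : W →ₗ[ℝ] W) := by
    ext x y
    rw [hv, ← hw_sq, sq]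
    exact ((LinearMap.IsAdjointPair.aeval hvsa p) x (w y)).symm
  rw [hθ', signature_compl₁₂]

/-- Linear-algebra core of the tannakian comparison theorem: if `η, η'` on `V` and
`θ, θ'` on `W` are related by self-adjoint endomorphisms `u`, `v` with the same
characteristic polynomial, and `η, η'` are positive definite while `θ` is
nondegenerate, then `θ` and `θ'` have the same signature. -/
theorem stmt_19 {V : Type*} [AddCommGroup V] [Module ℝ V] [FiniteDimensional ℝ V]
    {W : Type*} [AddCommGroup W] [Module ℝ W] [FiniteDimensional ℝ W]
    (hdim : Module.finrank ℝ V = Module.finrank ℝ W)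
    (η η' : V →ₗ[ℝ] V →ₗ[ℝ] ℝ) (θ θ' : W →ₗ[ℝ] W →ₗ[ℝ] ℝ)
    (hηsymm : ∀ x y, η x y = η y x) (hη'symm : ∀ x y, η' x y = η' y x)
    (hθsymm : ∀ x y, θ x y = θ y x) (hθ'symm : ∀ x y, θ' x y = θ' y x)
    (u : V →ₗ[ℝ] V) (v : W →ₗ[ℝ] W)
    (hu : ∀ x y, η' x y = η x (u y)) (hv : ∀ x y, θ' x y = θ x (v y))
    (husa : ∀ x y, η (u x) y = η x (u y)) (hvsa : ∀ x y, θ (v x) y = θ x (v y))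
    (hcharpoly : LinearMap.charpoly u = LinearMap.charpoly v)
    (hηpos : ∀ x : V, x ≠ 0 → 0 < η x x) (hη'pos : ∀ x : V, x ≠ 0 → 0 < η' x x)
    (hθnd : ∀ x : W, (∀ y : W, θ x y = 0) → x = 0) :
    signature θ = signature θ' :=
  stmt_19_general η η' θ θ' hηsymm u v hu hv husa hvsa hcharpoly hηpos hη'pos
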